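/- Let B₀ > 0, v > 0, k ∈ ℝ, n ≥ 1 an integer, and s ∈ {+1, -1}. Define ψ_{m,k}(x) = (B₀^{1/4} / (π^{1/4} √(2^m m!))) H_m(ξ) e^{-ξ²/2} with ξ = √B₀ (x - k/B₀). Then the spinor (u₁, u₂) = (i ψ_{n,k}, s ψ_{n-1,k}) is an eigenfunction of the fibered Dirac operator 𝒟(k) with eigenvalue s·v·√(2 n B₀): that is, 𝒟(k)(u₁, u₂)(x) = s v √(2 n B₀) (u₁(x), u₂(x)) for every x ∈ ℝ. -/

import Mathlib

open Complex

/-- The physicists' Hermite polynomials, as real functions: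
`H₀ = 1`, `H₁ x = 2x`, and `H_{m+1} x = 2x · H_m x - 2m · H_{m-1} x`. -/
noncomputable def physHermite : ℕ → ℝ → ℝ
  | 0 => fun _ => 1
  | 1 => fun x => 2 * x
  | n + 2 => fun x => 2 * x * physHermite (n + 1) x - 2 * (n + 1) * physHermite n x

/-- The normalized Landau-level eigenmode `ψ_{m,k}`. -/
noncomputable def landauMode (B₀ k : ℝ) (m : ℕ) (x : ℝ) : ℝ :=
  B₀ ^ ((1:ℝ)/4) / (Real.pi ^ ((1:ℝ)/4) * Real.sqrt (2^m * (m.factorial : ℝ))) *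
    (physHermite m (Real.sqrt B₀ * (x - k / B₀)) *
      Real.exp (-(Real.sqrt B₀ * (x - k / B₀))^2 / 2))

/-!
With `ξ = √B₀ (x - k/B₀)` one has `k - B₀ x = -√B₀ ξ`, so on `ψ_{m,k} = c_m φ_m(ξ)`, where
`φ_m = H_m e^{-ξ²/2}`, the two components of `𝒟(k)` act as `√B₀` times the ladder operators
`d/dξ ∓ ξ`. From `H_m' = 2m H_{m-1}` and the three-term recurrence,
`φ_m' - ξ φ_m = -φ_{m+1}` and `φ_{m+1}' + ξ φ_{m+1} = 2(m+1) φ_m`, and the normalizations satisfy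
`c_m = √(2(m+1)) c_{m+1}`; so both ladder operators become multiplication by `√(2(m+1)B₀)`
between levels `m` and `m+1`, and the phases `i`, `s` (with `s² = 1`) make the spinor an eigenvector.
-/

theorem physHermite_succ (m : ℕ) (x : ℝ) :
    physHermite (m + 1) x = 2 * x * physHermite m x - 2 * m * physHermite (m - 1) x := by
  cases m <;> simp [physHermite]

theorem hasDerivAt_physHermite : ∀ (m : ℕ) (x : ℝ),
    HasDerivAt (physHermite m) (2 * m * physHermite (m - 1) x) x
  | 0, x => by simpa [physHermite] using hasDerivAt_const x (1 : ℝ)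
  | 1, x => by simpa [physHermite] using (hasDerivAt_id x).const_mul (2 : ℝ)
  | m + 2, x => by
    have h := (((hasDerivAt_id x).const_mul 2).mul (hasDerivAt_physHermite (m + 1) x)).sub
      ((hasDerivAt_physHermite m x).const_mul (2 * ((m : ℝ) + 1)))
    refine h.congr_deriv ?_
    have := physHermite_succ m x
    simp only [id, Nat.add_sub_cancel] at this ⊢
    push_cast
    linear_combination (-2 * ((m : ℝ) + 1)) * this

noncomputable def hermiteFunction (m : ℕ) (ξ : ℝ) : ℝ :=
  physHermite m ξ * Real.exp (-ξ ^ 2 / 2)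

theorem hasDerivAt_hermiteFunction (m : ℕ) (ξ : ℝ) :
    HasDerivAt (hermiteFunction m)
      (2 * m * hermiteFunction (m - 1) ξ - ξ * hermiteFunction m ξ) ξ := by
  have hexp : HasDerivAt (fun ξ : ℝ => Real.exp (-ξ ^ 2 / 2)) (Real.exp (-ξ ^ 2 / 2) * -ξ) ξ := by
    refine (((hasDerivAt_pow 2 ξ).neg.div_const 2).exp).congr_deriv ?_
    simp only [Pi.neg_apply]
    ring
  refine ((hasDerivAt_physHermite m ξ).mul hexp).congr_deriv ?_
  simp only [hermiteFunction]
  ring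

theorem hasDerivAt_hermiteFunction_raising (m : ℕ) (ξ : ℝ) :
    HasDerivAt (hermiteFunction m) (ξ * hermiteFunction m ξ - hermiteFunction (m + 1) ξ) ξ := by
  refine (hasDerivAt_hermiteFunction m ξ).congr_deriv ?_
  simp only [hermiteFunction, physHermite_succ]
  ring

theorem hasDerivAt_hermiteFunction_lowering (m : ℕ) (ξ : ℝ) :
    HasDerivAt (hermiteFunction (m + 1))
      (2 * (m + 1) * hermiteFunction m ξ - ξ * hermiteFunction (m + 1) ξ) ξ := by
  simpa using hasDerivAt_hermiteFunction (m + 1) ξ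

noncomputable def landauConst (B₀ : ℝ) (m : ℕ) : ℝ :=
  B₀ ^ ((1 : ℝ) / 4) / (Real.pi ^ ((1 : ℝ) / 4) * Real.sqrt (2 ^ m * (m.factorial : ℝ)))

theorem landauConst_eq_sqrt_mul_landauConst_succ (B₀ : ℝ) (m : ℕ) :
    landauConst B₀ m = Real.sqrt (2 * (m + 1)) * landauConst B₀ (m + 1) := by
  have hsqrt : Real.sqrt (2 ^ (m + 1) * ((m + 1).factorial : ℝ)) =
      Real.sqrt (2 * (m + 1)) * Real.sqrt (2 ^ m * (m.factorial : ℝ)) := by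
    rw [← Real.sqrt_mul (by positivity)]
    push_cast [Nat.factorial_succ]
    ring_nf
  have hpos : Real.sqrt (2 * ((m : ℝ) + 1)) ≠ 0 := by positivity
  simp only [landauConst, hsqrt]
  field_simp

theorem landauMode_eq (B₀ k : ℝ) (m : ℕ) (x : ℝ) :
    landauMode B₀ k m x = landauConst B₀ m * hermiteFunction m (Real.sqrt B₀ * (x - k / B₀)) :=
  rfl

theorem HasDerivAt.landauMode {B₀ φ' : ℝ} {k : ℝ} {m : ℕ} {x : ℝ}
    (h : HasDerivAt (hermiteFunction m) φ' (Real.sqrt B₀ * (x - k / B₀))) :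
    HasDerivAt (landauMode B₀ k m) (landauConst B₀ m * (φ' * Real.sqrt B₀)) x := by
  have hξ : HasDerivAt (fun y : ℝ => Real.sqrt B₀ * (y - k / B₀)) (Real.sqrt B₀) x := by
    simpa using ((hasDerivAt_id x).sub_const (k / B₀)).const_mul (Real.sqrt B₀)
  exact (h.comp x hξ).const_mul (landauConst B₀ m)

theorem sqrt_mul_sqrt_mul_sub_div {B₀ : ℝ} (hB : 0 < B₀) (k x : ℝ) :
    Real.sqrt B₀ * (Real.sqrt B₀ * (x - k / B₀)) = -(k - B₀ * x) := by
  rw [← mul_assoc, Real.mul_self_sqrt hB.le]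
  field_simp
  ring

theorem hasDerivAt_landauMode_raising {B₀ : ℝ} (hB : 0 < B₀) (k : ℝ) (m : ℕ) (x : ℝ) :
    HasDerivAt (landauMode B₀ k m)
      (-(k - B₀ * x) * landauMode B₀ k m x
        - Real.sqrt (2 * (m + 1) * B₀) * landauMode B₀ k (m + 1) x) x := by
  refine (hasDerivAt_hermiteFunction_raising m _).landauMode.congr_deriv ?_
  rw [landauMode_eq, landauMode_eq, ← sqrt_mul_sqrt_mul_sub_div hB k x,
    Real.sqrt_mul (by positivity), landauConst_eq_sqrt_mul_landauConst_succ B₀ m]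
  ring

theorem hasDerivAt_landauMode_lowering {B₀ : ℝ} (hB : 0 < B₀) (k : ℝ) (m : ℕ) (x : ℝ) :
    HasDerivAt (landauMode B₀ k (m + 1))
      ((k - B₀ * x) * landauMode B₀ k (m + 1) x
        + Real.sqrt (2 * (m + 1) * B₀) * landauMode B₀ k m x) x := by
  refine (hasDerivAt_hermiteFunction_lowering m _).landauMode.congr_deriv ?_
  have hsq : Real.sqrt (2 * (m + 1)) ^ 2 = 2 * (m + 1) := Real.sq_sqrt (by positivity)
  rw [landauMode_eq, landauMode_eq, ← neg_neg (k - B₀ * x), ← sqrt_mul_sqrt_mul_sub_div hB k x,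
    Real.sqrt_mul (by positivity), landauConst_eq_sqrt_mul_landauConst_succ B₀ m]
  linear_combination (-landauConst B₀ (m + 1) * hermiteFunction m (Real.sqrt B₀ * (x - k / B₀))
    * Real.sqrt B₀) * hsq

theorem stmt12_general (B₀ v k : ℝ) (hB : 0 < B₀) (n : ℕ) (hn : 1 ≤ n)
    (s : ℝ) (hs : s = 1 ∨ s = -1)
    (u₁ u₂ : ℝ → ℂ)
    (hu₁ : u₁ = fun x => I * Complex.ofReal (landauMode B₀ k n x))
    (hu₂ : u₂ = fun x => (s : ℂ) * Complex.ofReal (landauMode B₀ k (n - 1) x)) :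
    ∀ x : ℝ,
      (v : ℂ) * (-I * deriv u₂ x - I * ((k : ℂ) - (B₀ : ℂ) * (x : ℂ)) * u₂ x) =
        (s : ℂ) * (v : ℂ) * Complex.ofReal (Real.sqrt (2 * n * B₀)) * u₁ x ∧
      (v : ℂ) * (-I * deriv u₁ x + I * ((k : ℂ) - (B₀ : ℂ) * (x : ℂ)) * u₁ x) =
        (s : ℂ) * (v : ℂ) * Complex.ofReal (Real.sqrt (2 * n * B₀)) * u₂ x := by
  obtain ⟨m, rfl⟩ := Nat.exists_eq_add_of_le' hn
  intro x
  subst hu₁ hu₂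
  simp only [Nat.add_sub_cancel]
  rw [((hasDerivAt_landauMode_raising hB k m x).ofReal_comp.const_mul (s : ℂ)).deriv,
    ((hasDerivAt_landauMode_lowering hB k m x).ofReal_comp.const_mul I).deriv]
  have hs_sq : (s : ℂ) ^ 2 = 1 := by rcases hs with rfl | rfl <;> norm_num
  push_cast
  constructor
  · ring
  · linear_combination (-(v : ℂ) * Real.sqrt (2 * (m + 1) * B₀) * landauMode B₀ k m x) *
      (hs_sq + I_sq)

theorem stmt12 (B₀ v k : ℝ) (hB : 0 < B₀) (hv : 0 < v) (n : ℕ) (hn : 1 ≤ n)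
    (s : ℝ) (hs : s = 1 ∨ s = -1)
    (u₁ u₂ : ℝ → ℂ)
    (hu₁ : u₁ = fun x => I * Complex.ofReal (landauMode B₀ k n x))
    (hu₂ : u₂ = fun x => (s : ℂ) * Complex.ofReal (landauMode B₀ k (n - 1) x)) :
    ∀ x : ℝ,
      (v : ℂ) * (-I * deriv u₂ x - I * ((k : ℂ) - (B₀ : ℂ) * (x : ℂ)) * u₂ x) =
        (s : ℂ) * (v : ℂ) * Complex.ofReal (Real.sqrt (2 * n * B₀)) * u₁ x ∧
      (v : ℂ) * (-I * deriv u₁ x + I * ((k : ℂ) - (B₀ : ℂ) * (x : ℂ)) * u₁ x) =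
        (s : ℂ) * (v : ℂ) * Complex.ofReal (Real.sqrt (2 * n * B₀)) * u₂ x :=
  stmt12_general B₀ v k hB n hn s hs u₁ u₂ hu₁ hu₂
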